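/- Let L ∈ F⟨X⟩^{d×d} be a full linear matrix that is stably associated to a nonconstant polynomial f ∈ F⟨X⟩ (for instance, obtained from f by Higman linearization). Then there exist a unit U' ∈ F⟨X⟩^{d×d}, an invertible scalar matrix S' ∈ F^{d×d} and an integer r' with 0 ≤ r' < d such that S'·L·U' = L' ⊕ I_{r'}, where L' ∈ F⟨X⟩^{(d−r')×(d−r')} is a full left monic linear matrix; moreover, if L is not left monic then r' > 0. -/

import Mathlib

open Matrix BigOperators

/-- The degree of an element of the free algebra: the maximal length of a word
with nonzero coefficient. -/
noncomputable def ncDeg {F : Type*} [Field F] {σ : Type*} (f : FreeAlgebra F σ) : ℕ :=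
  (((FreeAlgebra.equivMonoidAlgebraFreeMonoid (R := F) (X := σ)) f).coeff.support.sup fun w => FreeMonoid.length w)

/-- A noncommutative polynomial is irreducible if it has degree ≥ 1 and admits no
factorization into two factors of degree ≥ 1. -/
def NCIrred {F : Type*} [Field F] {σ : Type*} (f : FreeAlgebra F σ) : Prop :=
  1 ≤ ncDeg f ∧ ¬ ∃ g h : FreeAlgebra F σ, f = g * h ∧ 1 ≤ ncDeg g ∧ 1 ≤ ncDeg h

/-- The linear matrix `A0 + ∑ i, A i • x i` with scalar coefficient matrices. -/
noncomputable def linMatrix {F : Type*} [Field F] {σ α β : Type*} [Fintype σ]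
    (A0 : Matrix α β F) (A : σ → Matrix α β F) : Matrix α β (FreeAlgebra F σ) :=
  Matrix.of fun j k =>
    algebraMap F (FreeAlgebra F σ) (A0 j k) + ∑ i, A i j k • FreeAlgebra.ι F i

/-- A matrix over the free algebra is a linear matrix if each entry is an affine
linear form. -/
def IsLinearMat {F : Type*} [Field F] {σ α β : Type*} [Fintype σ]
    (M : Matrix α β (FreeAlgebra F σ)) : Prop :=
  ∃ (A0 : Matrix α β F) (A : σ → Matrix α β F), M = linMatrix A0 A

/-- A square matrix is full if it cannot be written as a product through a smaller
dimension. -/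
def IsFullMat {R : Type*} [Semiring R] {α : Type*} [Fintype α]
    (M : Matrix α α R) : Prop :=
  ¬ ∃ (e : ℕ) (_ : e < Fintype.card α)
      (M₁ : Matrix α (Fin e) R) (M₂ : Matrix (Fin e) α R), M = M₁ * M₂

/-- A full non-unit square matrix is an atom if it cannot be written as a product of
two full non-units. -/
def IsMatAtom {R : Type*} [Semiring R] {α : Type*} [Fintype α] [DecidableEq α]
    (M : Matrix α α R) : Prop :=
  IsFullMat M ∧ ¬ IsUnit M ∧
    ∀ A B : Matrix α α R, M = A * B →
      ¬ (IsFullMat A ∧ ¬ IsUnit A ∧ IsFullMat B ∧ ¬ IsUnit B)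

/-- The coefficient family `A` is right monic: `[A_1 A_2 ⋯ ]` has full row rank. -/
def RightMonicCoeffs {F : Type*} [Field F] {σ α : Type*} [Fintype σ] [Fintype α]
    (A : σ → Matrix α α F) : Prop :=
  (Matrix.of fun (j : α) (p : σ × α) => A p.1 j p.2).rank = Fintype.card α

/-- The coefficient family `A` is left monic: the stacked matrix has full column rank. -/
def LeftMonicCoeffs {F : Type*} [Field F] {σ α : Type*} [Fintype σ] [Fintype α]
    (A : σ → Matrix α α F) : Prop :=
  (Matrix.of fun (p : σ × α) (k : α) => A p.1 p.2 k).rank = Fintype.card α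

/-- A right monic linear matrix. -/
def IsRightMonicLinear {F : Type*} [Field F] {σ α : Type*} [Fintype σ] [Fintype α]
    (M : Matrix α α (FreeAlgebra F σ)) : Prop :=
  ∃ (A0 : Matrix α α F) (A : σ → Matrix α α F), M = linMatrix A0 A ∧ RightMonicCoeffs A

/-- A left monic linear matrix. -/
def IsLeftMonicLinear {F : Type*} [Field F] {σ α : Type*} [Fintype σ] [Fintype α]
    (M : Matrix α α (FreeAlgebra F σ)) : Prop :=
  ∃ (A0 : Matrix α α F) (A : σ → Matrix α α F), M = linMatrix A0 A ∧ LeftMonicCoeffs A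

/-- `M ⊕ I_k` : block diagonal with blocks `M` and the `k × k` identity. -/
def oplusId {R : Type*} [Semiring R] {d : ℕ} (M : Matrix (Fin d) (Fin d) R) (k : ℕ) :
    Matrix (Fin (d + k)) (Fin (d + k)) R :=
  Matrix.reindex finSumFinEquiv finSumFinEquiv (Matrix.fromBlocks M 0 0 1)

/-- A polynomial viewed as a `1 × 1` matrix. -/
def toMat1 {R : Type*} (f : R) : Matrix (Fin 1) (Fin 1) R := Matrix.of fun _ _ => f

/-- Block lower triangular matrix `[[A, 0], [D, B]]`. -/
def lowerBlocks {R : Type*} [Semiring R] {r s : ℕ}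
    (A : Matrix (Fin r) (Fin r) R) (D : Matrix (Fin s) (Fin r) R)
    (B : Matrix (Fin s) (Fin s) R) : Matrix (Fin (r + s)) (Fin (r + s)) R :=
  Matrix.reindex finSumFinEquiv finSumFinEquiv (Matrix.fromBlocks A 0 D B)

/-- `A` and `B` are stable associates: `A ⊕ I_t = P (B ⊕ I_t') Q` for units `P, Q`. -/
def StableAssoc {R : Type*} [Semiring R] {d d' : ℕ}
    (A : Matrix (Fin d) (Fin d) R) (B : Matrix (Fin d') (Fin d') R) : Prop :=
  ∃ (t t' : ℕ), 0 < t ∧ 0 < t' ∧ ∃ (h : d' + t' = d + t),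
    ∃ P Q : Matrix (Fin (d + t)) (Fin (d + t)) R, IsUnit P ∧ IsUnit Q ∧
      oplusId A t = P * Matrix.reindex (finCongr h) (finCongr h) (oplusId B t') * Q

/-- The dilated linear matrix `A0 ⊗ I_ℓ + ∑ i, A i ⊗ (Y i + M i)` in the matrix
variables `y_{i,j,k}`. -/
noncomputable def dilate {F : Type*} [Field F] {n d : ℕ}
    (A0 : Matrix (Fin d) (Fin d) F) (A : Fin n → Matrix (Fin d) (Fin d) F) (ℓ : ℕ)
    (M : Fin n → Matrix (Fin ℓ) (Fin ℓ) F) :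
    Matrix (Fin d × Fin ℓ) (Fin d × Fin ℓ) (FreeAlgebra F (Fin n × Fin ℓ × Fin ℓ)) :=
  Matrix.of fun p q =>
    algebraMap F (FreeAlgebra F (Fin n × Fin ℓ × Fin ℓ))
      (A0 p.1 q.1 * (if p.2 = q.2 then 1 else 0) + ∑ i, A i p.1 q.1 * M i p.2 q.2) +
      ∑ i : Fin n, A i p.1 q.1 • FreeAlgebra.ι F (i, p.2, q.2)

/-- The diagonal block of `M` corresponding to the fiber `b ⁻¹ {i}`, reindexed by `Fin`. -/
noncomputable def diagBlock {R : Type*} {d r : ℕ} (M : Matrix (Fin d) (Fin d) R)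
    (b : Fin d → Fin r) (i : Fin r) :
    Matrix (Fin (Fintype.card {j : Fin d // b j = i}))
      (Fin (Fintype.card {j : Fin d // b j = i})) R :=
  Matrix.of fun x y =>
    M ((Fintype.equivFin {j : Fin d // b j = i}).symm x : {j : Fin d // b j = i})
      ((Fintype.equivFin {j : Fin d // b j = i}).symm y : {j : Fin d // b j = i})

/-!
Stable association preserves invertibility, and a polynomial of degree `≥ 1` is not a unit of
`F⟨X⟩` (the coefficients of top-length words multiply without cancellation in the free monoid),
so `L` is not a unit. If `L = A₀ + ∑ Aᵢ xᵢ` is not left monic, the `Aᵢ` have a common kernel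
vector `v ≠ 0`. After a scalar change of basis `T` sending the last basis vector to `v`, the last
column of `L T` is the constant vector `A₀ v`, which is nonzero because `L` is full; a scalar row
operation turns it into the last basis vector, and a column operation over `F⟨X⟩` then clears
the last row. This splits off a `1 × 1` identity block and leaves a smaller full linear non-unit
matrix, so induction on `d` applies.
-/

theorem FreeMonoid.uniqueMul_of_forall_length_le {σ : Type*} {A B : Finset (FreeMonoid σ)}
    {w v : FreeMonoid σ} (hw : ∀ a ∈ A, a.length ≤ w.length)
    (hv : ∀ b ∈ B, b.length ≤ v.length) : UniqueMul A B w v := by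
  intro a b ha hb hab
  have hlen : a.length = w.length := by
    have := congrArg FreeMonoid.length hab
    simp only [FreeMonoid.length_mul] at this
    linarith [hw a ha, hv b hb]
  have := List.append_inj (congrArg FreeMonoid.toList hab) hlen
  exact ⟨FreeMonoid.toList.injective this.1, FreeMonoid.toList.injective this.2⟩

theorem not_isUnit_of_one_le_ncDeg {F : Type*} [Field F] {σ : Type*} {f : FreeAlgebra F σ}
    (hf : 1 ≤ ncDeg f) : ¬ IsUnit f := by
  rintro ⟨u, rfl⟩
  set Φ := FreeAlgebra.equivMonoidAlgebraFreeMonoid (R := F) (X := σ)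
  have hΦ : Φ ↑u * Φ ↑u⁻¹ = 1 := by rw [← map_mul, u.mul_inv, map_one]
  have hinv : (Φ ↑u⁻¹).coeff.support.Nonempty := by
    rw [Finsupp.support_nonempty_iff]
    rintro h
    simp [MonoidAlgebra.coeff_eq_zero.mp h] at hΦ
  have hne : (Φ ↑u).coeff.support.Nonempty := Finset.nonempty_of_ne_empty (by
    rintro h
    simp [ncDeg, Φ, h] at hf)
  obtain ⟨w, hw, hwmax⟩ := Finset.exists_mem_eq_sup _ hne FreeMonoid.length
  obtain ⟨v, hv, hvmax⟩ := Finset.exists_mem_eq_sup _ hinv FreeMonoid.length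
  have htop := MonoidAlgebra.coeff_mul_mul_of_uniqueMul
    (FreeMonoid.uniqueMul_of_forall_length_le (w := w) (v := v)
      (fun a ha => hwmax ▸ Finset.le_sup ha) (fun b hb => hvmax ▸ Finset.le_sup hb))
  have hwv : w * v ≠ 1 := by
    intro h
    have := congrArg FreeMonoid.length h
    simp only [FreeMonoid.length_mul, FreeMonoid.length_one] at this
    have : 1 ≤ w.length := hwmax ▸ hf
    omega
  rw [hΦ, MonoidAlgebra.one_def, MonoidAlgebra.coeff_single, Finsupp.single_eq_of_ne hwv]
    at htop
  exact mul_ne_zero (Finsupp.mem_support_iff.mp hw) (Finsupp.mem_support_iff.mp hv) htop.symm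

section OplusId

variable {R : Type*} [Semiring R] {d k : ℕ}

@[simp]
theorem oplusId_castAdd_castAdd (B : Matrix (Fin d) (Fin d) R) (i j : Fin d) :
    oplusId B k (Fin.castAdd k i) (Fin.castAdd k j) = B i j := by
  simp [oplusId]

@[simp]
theorem oplusId_castAdd_natAdd (B : Matrix (Fin d) (Fin d) R) (i : Fin d) (j : Fin k) :
    oplusId B k (Fin.castAdd k i) (Fin.natAdd d j) = 0 := by
  simp [oplusId]

@[simp]
theorem oplusId_natAdd_castAdd (B : Matrix (Fin d) (Fin d) R) (i : Fin k) (j : Fin d) :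
    oplusId B k (Fin.natAdd d i) (Fin.castAdd k j) = 0 := by
  simp [oplusId]

@[simp]
theorem oplusId_natAdd_natAdd (B : Matrix (Fin d) (Fin d) R) (i j : Fin k) :
    oplusId B k (Fin.natAdd d i) (Fin.natAdd d j) = (1 : Matrix (Fin k) (Fin k) R) i j := by
  simp [oplusId]

theorem oplusId_apply (B : Matrix (Fin d) (Fin d) R) (i j : Fin (d + k)) :
    oplusId B k i j =
      if hi : (i : ℕ) < d then if hj : (j : ℕ) < d then B ⟨i, hi⟩ ⟨j, hj⟩ else 0
      else if (i : ℕ) = j then 1 else 0 := by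
  induction i using Fin.addCases <;> induction j using Fin.addCases <;>
    simp [Matrix.one_apply, Fin.ext_iff]
  omega

theorem oplusId_mul (A B : Matrix (Fin d) (Fin d) R) :
    oplusId A k * oplusId B k = oplusId (A * B) k := by
  simp [oplusId, Matrix.fromBlocks_multiply]

theorem oplusId_one : oplusId (1 : Matrix (Fin d) (Fin d) R) k = 1 := by
  simp [oplusId]

theorem map_oplusId {S : Type*} [Semiring S] (f : R →+* S) (B : Matrix (Fin d) (Fin d) R) :
    (oplusId B k).map f = oplusId (B.map f) k := by
  simp [oplusId, ← Matrix.submatrix_map, Matrix.fromBlocks_map]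

theorem submatrix_castAdd_oplusId_mul (B : Matrix (Fin d) (Fin d) R)
    (V : Matrix (Fin (d + k)) (Fin (d + k)) R) :
    (oplusId B k * V).submatrix (Fin.castAdd k) (Fin.castAdd k) =
      B * V.submatrix (Fin.castAdd k) (Fin.castAdd k) := by
  ext i j
  simp [Matrix.mul_apply, Fin.sum_univ_add]

theorem submatrix_castAdd_mul_oplusId (B : Matrix (Fin d) (Fin d) R)
    (V : Matrix (Fin (d + k)) (Fin (d + k)) R) :
    (V * oplusId B k).submatrix (Fin.castAdd k) (Fin.castAdd k) =
      V.submatrix (Fin.castAdd k) (Fin.castAdd k) * B := by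
  ext i j
  simp [Matrix.mul_apply, Fin.sum_univ_add]

theorem isUnit_oplusId_iff (B : Matrix (Fin d) (Fin d) R) :
    IsUnit (oplusId B k) ↔ IsUnit B := by
  have hone : (1 : Matrix (Fin (d + k)) (Fin (d + k)) R).submatrix (Fin.castAdd k)
      (Fin.castAdd k) = 1 :=
    Matrix.submatrix_one _ (Fin.castAdd_injective d k)
  constructor
  · intro h
    obtain ⟨V, hright, hleft⟩ := isUnit_iff_exists.mp h
    refine isUnit_iff_exists.mpr ⟨V.submatrix (Fin.castAdd k) (Fin.castAdd k), ?_, ?_⟩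
    · rw [← submatrix_castAdd_oplusId_mul, hright, hone]
    · rw [← submatrix_castAdd_mul_oplusId, hleft, hone]
  · intro h
    obtain ⟨V, hright, hleft⟩ := isUnit_iff_exists.mp h
    exact isUnit_iff_exists.mpr ⟨oplusId V k, by rw [oplusId_mul, hright, oplusId_one],
      by rw [oplusId_mul, hleft, oplusId_one]⟩

theorem oplusId_zero (B : Matrix (Fin d) (Fin d) R) : oplusId B 0 = B := by
  ext i j
  simp [oplusId_apply]

theorem oplusId_reindex_oplusId {e r m : ℕ} (h : e + r = m) (B : Matrix (Fin e) (Fin e) R) :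
    oplusId (Matrix.reindex (finCongr h) (finCongr h) (oplusId B r)) 1 =
      Matrix.reindex (finCongr (by omega)) (finCongr (by omega)) (oplusId B (r + 1)) := by
  ext i j
  simp only [Matrix.reindex_apply, Matrix.submatrix_apply, finCongr_symm, finCongr_apply,
    Fin.val_cast, oplusId_apply]
  split_ifs <;> first | rfl | omega

end OplusId

theorem isUnit_toMat1_iff {R : Type*} [Semiring R] (f : R) : IsUnit (toMat1 f) ↔ IsUnit f :=
  (MulEquiv.isUnit_map (Matrix.uniqueRingEquiv (m := Fin 1) (A := R))).symm

theorem StableAssoc.isUnit_of_isUnit {R : Type*} [Semiring R] {d d' : ℕ}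
    {A : Matrix (Fin d) (Fin d) R} {B : Matrix (Fin d') (Fin d') R} (h : StableAssoc A B)
    (hB : IsUnit B) : IsUnit A := by
  obtain ⟨t, t', -, -, hdim, P, Q, hP, hQ, hAB⟩ := h
  have hB' := ((isUnit_oplusId_iff B).mpr hB).map (Matrix.reindexAlgEquiv ℕ R (finCongr hdim))
  rw [Matrix.coe_reindexAlgEquiv] at hB'
  rw [← isUnit_oplusId_iff (k := t), hAB]
  exact (hP.mul hB').mul hQ

section Full

variable {R : Type*} [Semiring R]

theorem IsFullMat.mul_isUnit {α : Type*} [Fintype α] [DecidableEq α] {M Q : Matrix α α R}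
    (hM : IsFullMat M) (hQ : IsUnit Q) : IsFullMat (M * Q) := by
  rintro ⟨e, he, M₁, M₂, h⟩
  obtain ⟨u, rfl⟩ := hQ
  exact hM ⟨e, he, M₁, M₂ * (↑u⁻¹ : Matrix α α R), by
    rw [← Matrix.mul_assoc, ← h, Matrix.mul_assoc, Units.mul_inv, Matrix.mul_one]⟩

theorem IsFullMat.isUnit_mul {α : Type*} [Fintype α] [DecidableEq α] {P M : Matrix α α R}
    (hM : IsFullMat M) (hP : IsUnit P) : IsFullMat (P * M) := by
  rintro ⟨e, he, M₁, M₂, h⟩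
  obtain ⟨u, rfl⟩ := hP
  exact hM ⟨e, he, (↑u⁻¹ : Matrix α α R) * M₁, M₂, by
    rw [Matrix.mul_assoc, ← h, ← Matrix.mul_assoc, Units.inv_mul, Matrix.one_mul]⟩

theorem IsFullMat.of_oplusId {d k : ℕ} {B : Matrix (Fin d) (Fin d) R}
    (h : IsFullMat (oplusId B k)) : IsFullMat B := by
  rintro ⟨e, he, B₁, B₂, rfl⟩
  refine h ⟨e + k, by simpa using he, Matrix.reindex finSumFinEquiv finSumFinEquiv
    (Matrix.fromBlocks B₁ 0 0 1), Matrix.reindex finSumFinEquiv finSumFinEquiv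
    (Matrix.fromBlocks B₂ 0 0 1), ?_⟩
  simp [oplusId, Matrix.fromBlocks_multiply]

theorem not_isFullMat_of_forall_apply_last_eq_zero {m : ℕ}
    {M : Matrix (Fin (m + 1)) (Fin (m + 1)) R} (h : ∀ j, M j (Fin.last m) = 0) : ¬ IsFullMat M := by
  refine fun hM => hM ⟨m, by simp, M.submatrix id Fin.castSucc,
    (1 : Matrix (Fin (m + 1)) (Fin (m + 1)) R).submatrix Fin.castSucc id, ?_⟩
  ext j k
  induction k using Fin.lastCases <;> simp [Matrix.mul_apply, Matrix.one_apply, h]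

end Full

theorem exists_isUnit_mul_eq_oplusId {R : Type*} [Ring R] {d k : ℕ}
    (N : Matrix (Fin (d + k)) (Fin (d + k)) R)
    (hN : ∀ i j, N i (Fin.natAdd d j) =
      (1 : Matrix (Fin (d + k)) (Fin (d + k)) R) i (Fin.natAdd d j)) :
    ∃ U, IsUnit U ∧ N * U = oplusId (N.submatrix (Fin.castAdd k) (Fin.castAdd k)) k := by
  set C := N.submatrix (Fin.natAdd d) (Fin.castAdd k)
  have hblocks : N = Matrix.reindex finSumFinEquiv finSumFinEquiv
      (Matrix.fromBlocks (N.submatrix (Fin.castAdd k) (Fin.castAdd k)) 0 C 1) := by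
    ext i j
    induction i using Fin.addCases <;> induction j using Fin.addCases <;>
      simp [C, hN, Matrix.one_apply, Fin.ext_iff]
    omega
  set E : Matrix (Fin d ⊕ Fin k) (Fin d ⊕ Fin k) R := Matrix.fromBlocks 1 0 (-C) 1
  have hE : E * Matrix.fromBlocks 1 0 C 1 = 1 ∧ Matrix.fromBlocks 1 0 C 1 * E = 1 := by
    simp [E, Matrix.fromBlocks_multiply]
  refine ⟨Matrix.reindex finSumFinEquiv finSumFinEquiv E,
    (isUnit_iff_exists.mpr ⟨_, hE⟩).map (Matrix.reindexAlgEquiv ℕ R finSumFinEquiv), ?_⟩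
  conv_lhs => rw [hblocks]
  simp [E, oplusId, Matrix.fromBlocks_multiply]

theorem exists_isUnit_mulVec_eq {K ι : Type*} [Field K] [Fintype ι] [DecidableEq ι]
    {v w : ι → K} (hv : v ≠ 0) (hw : w ≠ 0) : ∃ T : Matrix ι ι K, IsUnit T ∧ T *ᵥ v = w := by
  let toSpan (u : ι → K) (hu : u ≠ 0) := LinearEquiv.toSpanNonzeroSingleton K _ u hu
  obtain ⟨g, hg⟩ :=
    Submodule.exists_linearEquiv_restrict_eq ((toSpan v hv).symm ≪≫ₗ toSpan w hw)
  refine ⟨LinearMap.toMatrix' g.toLinearMap,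
    ((Module.End.isUnit_iff _).mpr g.bijective).map LinearMap.toMatrixAlgEquiv', ?_⟩
  have hv1 : (toSpan v hv).symm ⟨v, Submodule.mem_span_singleton_self v⟩ = 1 := by
    rw [LinearEquiv.symm_apply_eq, LinearEquiv.toSpanNonzeroSingleton_one]
  have := hg ⟨v, Submodule.mem_span_singleton_self v⟩
  rw [LinearEquiv.trans_apply, hv1, LinearEquiv.toSpanNonzeroSingleton_one] at this
  rw [LinearMap.toMatrix'_mulVec, LinearEquiv.coe_coe, ← this]

theorem exists_mulVec_eq_zero_of_rank_ne {K ι κ : Type*} [Field K] [Fintype κ]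
    (B : Matrix ι κ K) (h : B.rank ≠ Fintype.card κ) : ∃ v ≠ 0, B *ᵥ v = 0 := by
  by_contra! hker
  refine h ((LinearMap.finrank_range_of_inj fun x y hxy => ?_).trans
    (Module.finrank_fintype_fun_eq_card K))
  have := hker (x - y)
  simp_all [Matrix.mulVec_sub, sub_eq_zero]

theorem exists_forall_mulVec_eq_zero_of_not_leftMonicCoeffs {K σ ι : Type*} [Field K]
    [Fintype σ] [Fintype ι] {A : σ → Matrix ι ι K} (hA : ¬ LeftMonicCoeffs A) :
    ∃ v ≠ 0, ∀ i, A i *ᵥ v = 0 := by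
  obtain ⟨v, hv, hAv⟩ := exists_mulVec_eq_zero_of_rank_ne _ hA
  refine ⟨v, hv, fun i => funext fun j => ?_⟩
  simpa [Matrix.mulVec, dotProduct] using congrFun hAv (i, j)

section LinMatrix

variable {K σ : Type*} [Field K] [Fintype σ]

theorem map_mul_linMatrix {α β : Type*} [Fintype α] (S : Matrix α α K)
    (A0 : Matrix α β K) (A : σ → Matrix α β K) :
    S.map (algebraMap K (FreeAlgebra K σ)) * linMatrix A0 A =
      linMatrix (S * A0) (fun i => S * A i) := by
  ext j k
  simp only [linMatrix, Matrix.mul_apply, Matrix.map_apply, Matrix.of_apply, Algebra.smul_def,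
    map_sum, map_mul, Finset.mul_sum, mul_add, Finset.sum_mul, mul_assoc, Finset.sum_add_distrib]
  rw [Finset.sum_comm]

theorem linMatrix_mul_map {α β : Type*} [Fintype β] (T : Matrix β β K)
    (A0 : Matrix α β K) (A : σ → Matrix α β K) :
    linMatrix A0 A * T.map (algebraMap K (FreeAlgebra K σ)) =
      linMatrix (A0 * T) (fun i => A i * T) := by
  ext j k
  simp only [linMatrix, Matrix.mul_apply, Matrix.map_apply, Matrix.of_apply, Algebra.smul_def,
    map_sum, map_mul, add_mul, Finset.sum_mul, Finset.sum_add_distrib]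
  rw [Finset.sum_comm (s := Finset.univ (α := β))]
  simp only [mul_assoc, (Algebra.commutes _ (FreeAlgebra.ι K _)).symm]

theorem linMatrix_submatrix {α β α' β' : Type*} (A0 : Matrix α β K) (A : σ → Matrix α β K)
    (f : α' → α) (g : β' → β) :
    (linMatrix A0 A).submatrix f g =
      linMatrix (A0.submatrix f g) (fun i => (A i).submatrix f g) := by
  ext j k
  simp [linMatrix]

theorem linMatrix_apply_of_forall_eq_zero {α β : Type*} (A0 : Matrix α β K)
    (A : σ → Matrix α β K) (j : α) (k : β) (hA : ∀ i, A i j k = 0) :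
    linMatrix A0 A j k = algebraMap K (FreeAlgebra K σ) (A0 j k) := by
  simp [linMatrix, hA]

end LinMatrix

theorem isUnit_map_algebraMap {F σ α : Type*} [Field F] [Fintype α] [DecidableEq α]
    {M : Matrix α α F} (hM : IsUnit M) : IsUnit (M.map (algebraMap F (FreeAlgebra F σ))) :=
  hM.map (algebraMap F (FreeAlgebra F σ)).mapMatrix

theorem exists_map_mul_mul_eq_oplusId_one {F σ : Type*} [Field F] [Fintype σ] {m : ℕ}
    {L : Matrix (Fin (m + 1)) (Fin (m + 1)) (FreeAlgebra F σ)} (hfull : IsFullMat L)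
    (hlin : IsLinearMat L) (hmon : ¬ IsLeftMonicLinear L) :
    ∃ (W : Matrix (Fin (m + 1)) (Fin (m + 1)) F) (U : Matrix (Fin (m + 1)) (Fin (m + 1)) _)
      (L₁ : Matrix (Fin m) (Fin m) (FreeAlgebra F σ)), IsUnit W ∧ IsUnit U ∧ IsLinearMat L₁ ∧
      W.map (algebraMap F (FreeAlgebra F σ)) * L * U = oplusId L₁ 1 := by
  obtain ⟨A0, A, rfl⟩ := hlin
  set e : Fin (m + 1) → F := Pi.single (Fin.last m) 1
  have he : e ≠ 0 := by simp [e]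
  have hcol (M : Matrix (Fin (m + 1)) (Fin (m + 1)) F) (j) : M j (Fin.last m) = (M *ᵥ e) j := by
    simp [e]
  obtain ⟨v, hv, hAv⟩ :=
    exists_forall_mulVec_eq_zero_of_not_leftMonicCoeffs fun h => hmon ⟨A0, A, rfl, h⟩
  obtain ⟨T, hT, hTe⟩ := exists_isUnit_mulVec_eq he hv
  have hAT (S : Matrix (Fin (m + 1)) (Fin (m + 1)) F) (i j) :
      (S * A i * T) j (Fin.last m) = 0 := by
    simp [hcol, ← Matrix.mulVec_mulVec, hTe, hAv]
  -- fullness forbids the last column of `L T`, which is constant, from vanishing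
  have hc : A0 *ᵥ v ≠ 0 := by
    refine fun hc => not_isFullMat_of_forall_apply_last_eq_zero (fun j => ?_)
      (hfull.mul_isUnit (isUnit_map_algebraMap hT))
    rw [linMatrix_mul_map, linMatrix_apply_of_forall_eq_zero _ _ _ _
      (by simpa using hAT 1 · j), hcol (A0 * T), ← Matrix.mulVec_mulVec, hTe, hc]
    simp
  obtain ⟨W, hW, hWc⟩ := exists_isUnit_mulVec_eq hc he
  have hN : W.map (algebraMap F _) * linMatrix A0 A * T.map (algebraMap F _) =
      linMatrix (W * A0 * T) (fun i => W * A i * T) := by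
    rw [map_mul_linMatrix, linMatrix_mul_map]
  have hNcol (i) (j : Fin 1) :
      linMatrix (W * A0 * T) (fun i => W * A i * T) i (Fin.natAdd m j) =
        (1 : Matrix _ _ (FreeAlgebra F σ)) i (Fin.natAdd m j) := by
    obtain rfl : j = 0 := Subsingleton.elim _ _
    rw [show Fin.natAdd m (0 : Fin 1) = Fin.last m from rfl,
      linMatrix_apply_of_forall_eq_zero _ _ _ _ (hAT W · i), hcol (W * A0 * T),
      ← Matrix.mulVec_mulVec, ← Matrix.mulVec_mulVec, hTe, hWc]
    simp [e, Matrix.one_apply, Pi.single_apply]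
  obtain ⟨U, hU, hNU⟩ := exists_isUnit_mul_eq_oplusId _ hNcol
  refine ⟨W, T.map (algebraMap F _) * U, _, hW, (isUnit_map_algebraMap hT).mul hU, ?_,
    by rw [← Matrix.mul_assoc, hN, hNU]⟩
  exact ⟨_, _, linMatrix_submatrix _ _ _ _⟩

theorem exists_oplusId_isLeftMonicLinear_of_not_isUnit {F σ : Type*} [Field F] [Fintype σ]
    {d : ℕ} (L : Matrix (Fin d) (Fin d) (FreeAlgebra F σ)) (hfull : IsFullMat L)
    (hlin : IsLinearMat L) (hL : ¬ IsUnit L) :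
    ∃ (e r' : ℕ) (heq : e + r' = d)
      (U' : Matrix (Fin d) (Fin d) (FreeAlgebra F σ))
      (S' : Matrix (Fin d) (Fin d) F)
      (L' : Matrix (Fin e) (Fin e) (FreeAlgebra F σ)),
      0 < e ∧ IsUnit U' ∧ IsUnit S' ∧ IsFullMat L' ∧ IsLeftMonicLinear L' ∧
      S'.map (algebraMap F (FreeAlgebra F σ)) * L * U' =
        Matrix.reindex (finCongr heq) (finCongr heq) (oplusId L' r') ∧
      (¬ IsLeftMonicLinear L → 0 < r') := by
  induction d with
  | zero => exact absurd (isUnit_of_subsingleton L) hL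
  | succ m ih =>
    by_cases hmon : IsLeftMonicLinear L
    · refine ⟨m + 1, 0, rfl, 1, 1, L, m.succ_pos, isUnit_one, isUnit_one, hfull, hmon, ?_,
        absurd hmon⟩
      simp [oplusId_zero]
    obtain ⟨W, U, L₁, hW, hU, hL₁, hWLU⟩ := exists_map_mul_mul_eq_oplusId_one hfull hlin hmon
    have hL₁full : IsFullMat L₁ := by
      have := (hfull.isUnit_mul (isUnit_map_algebraMap hW)).mul_isUnit hU
      rw [hWLU] at this
      exact this.of_oplusId
    have hL₁unit : ¬ IsUnit L₁ := by
      rw [← isUnit_oplusId_iff (k := 1), ← hWLU]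
      obtain ⟨w, hw⟩ := isUnit_map_algebraMap (σ := σ) hW
      obtain ⟨u, rfl⟩ := hU
      rwa [← hw, Units.isUnit_mul_units, Units.isUnit_units_mul]
    obtain ⟨e, r₁, h₁, U₁, S₁, L', he, hU₁, hS₁, hL'full, hL'mon, hS₁L₁U₁, -⟩ :=
      ih L₁ hL₁full hL₁ hL₁unit
    refine ⟨e, r₁ + 1, by omega, U * oplusId U₁ 1, oplusId S₁ 1 * W, L', he,
      hU.mul ((isUnit_oplusId_iff U₁).mpr hU₁), ((isUnit_oplusId_iff S₁).mpr hS₁).mul hW,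
      hL'full, hL'mon, ?_, fun _ => r₁.succ_pos⟩
    calc (oplusId S₁ 1 * W).map (algebraMap F _) * L * (U * oplusId U₁ 1)
        = oplusId (S₁.map (algebraMap F _)) 1 * (W.map (algebraMap F _) * L * U) *
            oplusId U₁ 1 := by
          rw [Matrix.map_mul, map_oplusId]
          simp only [Matrix.mul_assoc]
      _ = oplusId (S₁.map (algebraMap F _) * L₁ * U₁) 1 := by
          rw [hWLU, oplusId_mul, oplusId_mul]
      _ = _ := by rw [hS₁L₁U₁, oplusId_reindex_oplusId]

/-- a full linear matrix stably associated to a nonconstant polynomial can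
be brought, by an invertible scalar matrix `S'` on the left and a unit `U'` on the right,
to the form `L' ⊕ I_{r'}` with `L'` a full left monic linear matrix and `r' < d`; moreover
`r' > 0` when `L` is not left monic. -/
theorem full_to_left_monic {F : Type*} [Field F] {n d : ℕ}
    (L : Matrix (Fin d) (Fin d) (FreeAlgebra F (Fin n)))
    (hfull : IsFullMat L) (hlin : IsLinearMat L)
    (f : FreeAlgebra F (Fin n)) (hdeg : 1 ≤ ncDeg f)
    (hassoc : StableAssoc (toMat1 f) L) :
    ∃ (e r' : ℕ) (heq : e + r' = d)
      (U' : Matrix (Fin d) (Fin d) (FreeAlgebra F (Fin n)))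
      (S' : Matrix (Fin d) (Fin d) F)
      (L' : Matrix (Fin e) (Fin e) (FreeAlgebra F (Fin n))),
      0 < e ∧ IsUnit U' ∧ IsUnit S' ∧ IsFullMat L' ∧ IsLeftMonicLinear L' ∧
      S'.map (algebraMap F (FreeAlgebra F (Fin n))) * L * U' =
        Matrix.reindex (finCongr heq) (finCongr heq) (oplusId L' r') ∧
      (¬ IsLeftMonicLinear L → 0 < r') :=
  exists_oplusId_isLeftMonicLinear_of_not_isUnit L hfull hlin fun hL =>
    not_isUnit_of_one_le_ncDeg hdeg ((isUnit_toMat1_iff f).mp (hassoc.isUnit_of_isUnit hL))
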